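/- arXiv:2404.03928 — 2 statements merged into one kernel-verified Lean document; each statement's English description precedes it below -/
import Mathlib

section
/- Let V be a complex vector space of dimension 2n with a nondegenerate symmetric bilinear form ω, and let W ⊆ V be a nondegenerate hyperplane (so dim W = 2n−1 and ω restricted to W is nondegenerate). Then for every isotropic subspace M ⊆ W with dim M = n−1 there exists a maximal isotropic (Lagrangian) subspace L of V with L ∩ W = M, and any two such L intersect W exactly in M. -/
/-!
The hyperplane `W` is nondegenerate, so `W^⊥` is a line spanned by an anisotropic vector `v`.
Isotropic subspaces of `W` have dimension at most `n - 1`, which gives uniqueness at once, and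
also shows that `M^⊥ ∩ W`, of dimension at least `n`, is not totally isotropic: it contains `w`
with `ω(w, w) ≠ 0`. Over `ℂ` we can solve `ω(w + c v, w + c v) = ω(w, w) + c² ω(v, v) = 0`
with `c ≠ 0`, and `L = M + ℂ (w + c v)` is the required Lagrangian.
-/

open Module Submodule

namespace LinearMap.BilinForm

variable {K V : Type*} [Field K] [AddCommGroup V] [Module K V] {B : LinearMap.BilinForm K V}
  {M P W : Submodule K V}

def IsTotallyIsotropic (B : LinearMap.BilinForm K V) (P : Submodule K V) : Prop :=
  ∀ x ∈ P, ∀ y ∈ P, B x y = 0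

namespace IsTotallyIsotropic

theorem mono (hP : B.IsTotallyIsotropic P) (hMP : M ≤ P) : B.IsTotallyIsotropic M :=
  fun x hx y hy => hP x (hMP hx) y (hMP hy)

theorem le_orthogonal (hP : B.IsTotallyIsotropic P) : P ≤ B.orthogonal P :=
  fun x hx => mem_orthogonal_iff.2 fun y hy => hP y hy x hx

theorem two_mul_finrank_le [FiniteDimensional K V] (hB : B.Nondegenerate)
    (hP : B.IsTotallyIsotropic P) : 2 * finrank K P ≤ finrank K V := by
  have hle := finrank_mono hP.le_orthogonal
  rw [finrank_orthogonal hB] at hle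
  have := P.finrank_le
  omega

theorem two_mul_finrank_le_of_le [FiniteDimensional K V] (hW : (B.restrict W).Nondegenerate)
    (hP : B.IsTotallyIsotropic P) (hPW : P ≤ W) : 2 * finrank K P ≤ finrank K W := by
  have hP' : (B.restrict W).IsTotallyIsotropic (P.comap W.subtype) :=
    fun x hx y hy => hP x hx y hy
  rw [← (comapSubtypeEquivOfLe hPW).finrank_eq]
  exact hP'.two_mul_finrank_le hW

theorem eq_of_le_of_finrank_lt [FiniteDimensional K V] (hW : (B.restrict W).Nondegenerate)
    (hP : B.IsTotallyIsotropic P) (hPW : P ≤ W) (hMP : M ≤ P)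
    (hWM : finrank K W < 2 * (finrank K M + 1)) : P = M := by
  have := hP.two_mul_finrank_le_of_le hW hPW
  exact (eq_of_le_of_finrank_le hMP (by omega)).symm

theorem sup_span_singleton (hB : B.IsRefl) (hP : B.IsTotallyIsotropic P) {u : V}
    (hu : B u u = 0) (huP : ∀ m ∈ P, B m u = 0) : B.IsTotallyIsotropic (P ⊔ K ∙ u) := by
  rintro _ hx _ hy
  obtain ⟨m, hm, _, hs, rfl⟩ := mem_sup.1 hx
  obtain ⟨s, rfl⟩ := mem_span_singleton.1 hs
  obtain ⟨m', hm', _, ht, rfl⟩ := mem_sup.1 hy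
  obtain ⟨t, rfl⟩ := mem_span_singleton.1 ht
  simp [hP m hm m' hm', huP m hm, hB _ _ (huP m' hm'), hu]

end IsTotallyIsotropic

theorem exists_apply_self_ne_zero_of_not_isTotallyIsotropic [Invertible (2 : K)]
    (hsymm : B.IsSymm) (hP : ¬ B.IsTotallyIsotropic P) : ∃ x ∈ P, B x x ≠ 0 := by
  have hres : B.restrict P ≠ 0 := by
    contrapose! hP
    intro x hx y hy
    simpa using congr($hP ⟨x, hx⟩ ⟨y, hy⟩)
  obtain ⟨x, hx⟩ := exists_bilinForm_self_ne_zero hres (isSymm_iff.1 (hsymm.restrict P))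
  exact ⟨x, x.2, hx⟩

theorem exists_ne_zero_apply_self_add_smul_eq_zero [IsAlgClosed K] {v w : V} (hv : B v v ≠ 0)
    (hw : B w w ≠ 0) (hvw : B v w = 0) (hwv : B w v = 0) :
    ∃ c : K, c ≠ 0 ∧ B (w + c • v) (w + c • v) = 0 := by
  obtain ⟨c, hc⟩ := IsAlgClosed.exists_pow_nat_eq (-B w w / B v v) two_pos
  have hcv : c ^ 2 * B v v = -B w w := by rw [hc, div_mul_cancel₀ _ hv]
  refine ⟨c, fun hc0 => hw ?_, ?_⟩
  · simpa [hc0] using hcv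
  · simp only [map_add, map_smul, LinearMap.add_apply, LinearMap.smul_apply, smul_eq_mul]
    linear_combination c * hvw + c * hwv + hcv

variable [FiniteDimensional K V]

theorem exists_mem_orthogonal_apply_self_ne_zero [Invertible (2 : K)] (hB : B.Nondegenerate)
    (hsymm : B.IsSymm) (hW : (B.restrict W).Nondegenerate) (hWtop : W ≠ ⊤) :
    ∃ v ∈ B.orthogonal W, B v v ≠ 0 := by
  refine exists_apply_self_ne_zero_of_not_isTotallyIsotropic hsymm fun hiso => hWtop ?_
  have hle : B.orthogonal W ≤ W :=
    hiso.le_orthogonal.trans (orthogonal_orthogonal hB hsymm.isRefl W).le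
  have hbot : B.orthogonal W = ⊥ := by
    simpa [inf_eq_right.2 hle] using
      (isCompl_orthogonal_of_restrict_nondegenerate hsymm.isRefl hW).inf_eq_bot
  exact eq_top_of_restrict_nondegenerate_of_orthogonal_eq_bot hsymm.isRefl hW hbot

theorem exists_mem_orthogonal_inf_apply_self_ne_zero [Invertible (2 : K)]
    (hB : B.Nondegenerate) (hsymm : B.IsSymm) (hW : (B.restrict W).Nondegenerate)
    (hMW : 2 * finrank K M < finrank K W) : ∃ w ∈ B.orthogonal M ⊓ W, B w w ≠ 0 := by
  refine exists_apply_self_ne_zero_of_not_isTotallyIsotropic hsymm fun hiso => ?_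
  have := hiso.two_mul_finrank_le_of_le hW inf_le_right
  have := finrank_sup_add_finrank_inf_eq (B.orthogonal M) W
  have := (B.orthogonal M ⊔ W).finrank_le
  have := finrank_orthogonal hB M
  have := M.finrank_le
  omega

theorem exists_isTotallyIsotropic_sup_span_singleton [IsAlgClosed K] [Invertible (2 : K)]
    (hB : B.Nondegenerate) (hsymm : B.IsSymm) (hW : (B.restrict W).Nondegenerate)
    (hWtop : W ≠ ⊤) (hM : B.IsTotallyIsotropic M) (hMW : M ≤ W)
    (hdim : 2 * finrank K M < finrank K W) : ∃ u ∉ W, B.IsTotallyIsotropic (M ⊔ K ∙ u) := by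
  obtain ⟨v, hvW, hv⟩ := exists_mem_orthogonal_apply_self_ne_zero hB hsymm hW hWtop
  obtain ⟨w, ⟨hwM, hwW⟩, hw⟩ := exists_mem_orthogonal_inf_apply_self_ne_zero hB hsymm hW hdim
  have hwv : B w v = 0 := mem_orthogonal_iff.1 hvW w hwW
  obtain ⟨c, hc, hu⟩ :=
    exists_ne_zero_apply_self_add_smul_eq_zero hv hw (hsymm.isRefl w v hwv) hwv
  have hvnotW : v ∉ W := fun h => hv (mem_orthogonal_iff.1 hvW v h)
  refine ⟨w + c • v, fun h => hvnotW ?_, hM.sup_span_singleton hsymm.isRefl hu fun m hm => ?_⟩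
  · exact (W.smul_mem_iff hc).1 ((W.add_mem_iff_right hwW).1 h)
  · simp [mem_orthogonal_iff.1 hwM m hm, mem_orthogonal_iff.1 hvW m (hMW hm)]

end LinearMap.BilinForm

open LinearMap.BilinForm

/-- Let `V` be a `2n`-dimensional complex orthogonal space and `W` a
nondegenerate hyperplane of dimension `2n - 1`. Then every isotropic `M ⊆ W` of
dimension `n - 1` is of the form `L ∩ W` for some Lagrangian subspace `L` of `V`,
and every Lagrangian subspace `L` of `V` containing `M` satisfies `L ∩ W = M`. -/
theorem stmt6 {V : Type*} [AddCommGroup V] [Module ℂ V] [FiniteDimensional ℂ V]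
    (n : ℕ) (hn : 1 ≤ n) (hdim : Module.finrank ℂ V = 2 * n)
    (ω : LinearMap.BilinForm ℂ V)
    (hnd : LinearMap.BilinForm.Nondegenerate ω)
    (hsym : ∀ x y : V, ω x y = ω y x)
    (W : Submodule ℂ V) (hWdim : Module.finrank ℂ W = 2 * n - 1)
    (hWnd : ∀ w ∈ W, (∀ w' ∈ W, ω w w' = 0) → w = 0)
    (M : Submodule ℂ V) (hMW : M ≤ W)
    (hMiso : ∀ x ∈ M, ∀ y ∈ M, ω x y = 0)
    (hMdim : Module.finrank ℂ M = n - 1) :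
    (∃ L : Submodule ℂ V, (∀ x ∈ L, ∀ y ∈ L, ω x y = 0) ∧
        Module.finrank ℂ L = n ∧ L ⊓ W = M) ∧
    (∀ L : Submodule ℂ V, (∀ x ∈ L, ∀ y ∈ L, ω x y = 0) →
        Module.finrank ℂ L = n → M ≤ L → L ⊓ W = M) := by
  have hsymm : ω.IsSymm := ⟨hsym⟩
  have hWres : (ω.restrict W).Nondegenerate :=
    ω.nondegenerate_restrict_of_disjoint_orthogonal hsymm.isRefl <| disjoint_def.2
      fun w hw hwW => hWnd w hw fun w' hw' => (hsym w w').trans (mem_orthogonal_iff.1 hwW w' hw')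
  have hWM : finrank ℂ W < 2 * (finrank ℂ M + 1) := by omega
  have unique : ∀ L, ω.IsTotallyIsotropic L → M ≤ L → L ⊓ W = M := fun L hL hML =>
    (hL.mono inf_le_left).eq_of_le_of_finrank_lt hWres inf_le_right (le_inf hML hMW) hWM
  refine ⟨?_, fun L hL _ hML => unique L hL hML⟩
  have hWtop : W ≠ ⊤ := by
    rintro rfl
    rw [finrank_top] at hWdim
    omega
  obtain ⟨u, huW, hu⟩ := exists_isTotallyIsotropic_sup_span_singleton hnd hsymm hWres hWtop
    hMiso hMW (by omega)
  refine ⟨M ⊔ ℂ ∙ u, hu, ?_, unique _ hu le_sup_left⟩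
  rw [finrank_sup_span_singleton fun h => huW (hMW h), hMdim]
  omega
end

section
/- Let U be a complex vector space and let (γ, M) and (δ, N) be pairs where γ, δ : V → U are injective linear maps from a vector space V of dimension ≥ 1, and M, N ⊆ U are subspaces with U = Im γ ⊕ M = Im δ ⊕ N. Suppose 𝒮 is a family of subspaces of V with ⋂_{F ∈ 𝒮} F = {0} and such that γ(F) ⊕ M = δ(F) ⊕ N for all F ∈ 𝒮. Then M = N. -/
lemma stmt13_aux {V U : Type*} [AddCommGroup V] [Module ℂ V] [AddCommGroup U] [Module ℂ U]
    (γ : V →ₗ[ℂ] U) (hγ : Function.Injective γ) (M : Submodule ℂ U)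
    (hd : Disjoint (LinearMap.range γ) M)
    (S : Set (Submodule ℂ V)) (hSne : S.Nonempty) (hSinf : sInf S = ⊥) :
    (⨅ F ∈ S, (F.map γ ⊔ M)) = M := by
  apply le_antisymm
  · intro u hu
    have hF : ∀ F ∈ S, u ∈ F.map γ ⊔ M := by
      intro F hF
      exact (Submodule.mem_iInf _).1 ((Submodule.mem_iInf _).1 hu F) hF
    obtain ⟨F₀, hF₀⟩ := hSne
    obtain ⟨y₀, hy₀, m₀, hm₀, hsum₀⟩ := Submodule.mem_sup.1 (hF F₀ hF₀)
    obtain ⟨x₀, hx₀F, rfl⟩ := Submodule.mem_map.1 hy₀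
    have hx0 : x₀ ∈ sInf S := by
      apply Submodule.mem_sInf.2
      intro F hFS
      obtain ⟨y, hy, m, hm, hsum⟩ := Submodule.mem_sup.1 (hF F hFS)
      obtain ⟨x, hxF, rfl⟩ := Submodule.mem_map.1 hy
      have heq : γ (x₀ - x) = m - m₀ := by
        rw [map_sub]
        have : γ x₀ + m₀ = γ x + m := by rw [hsum₀, hsum]
        rw [sub_eq_sub_iff_add_eq_add, this]; abel
      have hz : γ (x₀ - x) = 0 := by
        have h1 : γ (x₀ - x) ∈ LinearMap.range γ := ⟨_, rfl⟩
        have h2 : γ (x₀ - x) ∈ M := by rw [heq]; exact sub_mem hm hm₀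
        exact (Submodule.disjoint_def.1 hd) _ h1 h2
      have hx : x₀ = x := sub_eq_zero.1 (hγ (a₂ := 0) (by simpa using hz))
      rw [hx]; exact hxF
    rw [hSinf] at hx0
    have : x₀ = 0 := hx0
    rw [this] at hsum₀
    simp at hsum₀
    rw [← hsum₀]; exact hm₀
  · exact le_iInf₂ fun F hF => le_sup_right

/-- Let `γ, δ : V → U` be injective linear maps with complements
`U = Im γ ⊕ M = Im δ ⊕ N`, and let `S` be a nonempty family of subspaces of `V` with
`⋂ S = {0}` such that `γ(F) ⊕ M = δ(F) ⊕ N` for all `F ∈ S`. Then `M = N`. -/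
theorem stmt13 {V U : Type*} [AddCommGroup V] [Module ℂ V] [AddCommGroup U] [Module ℂ U]
    [Nontrivial V]
    (γ δ : V →ₗ[ℂ] U) (hγ : Function.Injective γ) (hδ : Function.Injective δ)
    (M N : Submodule ℂ U)
    (hM : IsCompl (LinearMap.range γ) M) (hN : IsCompl (LinearMap.range δ) N)
    (S : Set (Submodule ℂ V)) (hSne : S.Nonempty) (hSinf : sInf S = ⊥)
    (h : ∀ F ∈ S, F.map γ ⊔ M = F.map δ ⊔ N) :
    M = N := by
  have h1 := stmt13_aux γ hγ M hM.disjoint S hSne hSinf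
  have h2 := stmt13_aux δ hδ N hN.disjoint S hSne hSinf
  rw [← h1, ← h2]
  exact iInf_congr fun F => iInf_congr fun hF => h F hF
end
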